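/- Let n ≥ 1, d ≥ 1, 0 < λ ≤ 1 and K ≥ 0. Let u : B₁ → ℝ^d be a C¹ map on the open unit ball B₁ ⊂ ℝ^n, and suppose that for every x ∈ B_{3/4} and every 0 < r < 1/4 one has ∫_{B_r(x)} ‖Du(y)‖^n dy ≤ K^n r^{nλ}. Then there exists a constant C > 0, depending only on n, d and λ, such that for all x, y ∈ B_{1/2} one has ‖u(x) − u(y)‖ ≤ C K ‖x−y‖^λ; in particular u is λ-Hölder continuous on B_{1/2}. -/

import Mathlib

/-!
Campanato's argument. For `C¹` maps, `‖u z - u p‖ ≤ ‖z - p‖ ∫₀¹ ‖Du(p + t(z - p))‖ dt`; averaging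
over a ball `B` of radius `r/2` within distance `r/2` of `p`, exchanging the integrals and
undoing the homothety of ratio `t` bounds `∫_B ‖u - u p‖` by
`r ∫₀¹ t⁻ⁿ ∫_{B(p, tr)} ‖Du‖ dt`. By Jensen, the `Lⁿ` Morrey bound gives
`∫_{B(p, s)} ‖Du‖ ≲ K s^(n - 1 + λ)`, so the `t`-integrand is `≲ K r^(n - 1 + λ) t^(λ - 1)` and
`∫_B ‖u - u p‖ ≲ K r^(n + λ) / λ`. Taking for `B` the ball around the midpoint of `x` and `y`
with `r = ‖x - y‖` and dividing by `|B| ∼ rⁿ` gives the Hölder bound for `‖x - y‖ < 1/4`;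
a chain of four segments covers the rest of `B_{1/2}`.
-/

open MeasureTheory Metric Set Module Pointwise

theorem pow_setIntegral_le_mul_setIntegral_pow {α : Type*} [MeasurableSpace α] {μ : Measure α}
    {s : Set α} {f : α → ℝ} {n : ℕ} (hn : n ≠ 0) (hsm : MeasurableSet s) (hs : μ s ≠ ⊤)
    (hf0 : ∀ x ∈ s, 0 ≤ f x) (hf : IntegrableOn f s μ) (hfn : IntegrableOn (fun x ↦ f x ^ n) s μ) :
    (∫ x in s, f x ∂μ) ^ n ≤ μ.real s ^ (n - 1) * ∫ x in s, f x ^ n ∂μ := by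
  rcases eq_or_ne (μ s) 0 with h0 | h0
  · simp [Measure.restrict_eq_zero.mpr h0, hn]
  have hM : 0 < μ.real s := ENNReal.toReal_pos h0 hs
  have jensen : (⨍ x in s, f x ∂μ) ^ n ≤ ⨍ x in s, f x ^ n ∂μ :=
    (convexOn_pow n).map_set_average_le (continuousOn_pow n) isClosed_Ici h0 hs
      (ae_restrict_of_forall_mem hsm hf0) hf hfn
  rw [setAverage_eq, setAverage_eq, smul_eq_mul, smul_eq_mul, mul_pow,
    ← le_div_iff₀' (by positivity)] at jensen
  obtain ⟨k, rfl⟩ : ∃ k, n = k + 1 := ⟨n - 1, by omega⟩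
  calc _ ≤ _ := jensen
    _ = _ := by rw [Nat.add_sub_cancel, inv_pow, div_inv_eq_mul, pow_succ]; field_simp

variable {E F : Type*} [NormedAddCommGroup E] [NormedSpace ℝ E] [NormedAddCommGroup F]

theorem Convex.norm_sub_le_of_local_norm_sub_le {S : Set E} (hS : Convex ℝ S) {f : E → F}
    {C δ lam : ℝ} (hC : 0 ≤ C) (hlam : 0 ≤ lam)
    (hloc : ∀ x ∈ S, ∀ y ∈ S, ‖x - y‖ < δ → ‖f x - f y‖ ≤ C * ‖x - y‖ ^ lam)
    {N : ℕ} {x y : E} (hx : x ∈ S) (hy : y ∈ S) (hxy : ‖x - y‖ < N * δ) :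
    ‖f x - f y‖ ≤ N * C * ‖x - y‖ ^ lam := by
  rcases N.eq_zero_or_pos with rfl | hN
  · simp only [CharP.cast_eq_zero, zero_mul] at hxy
    exact absurd hxy (norm_nonneg _).not_gt
  have hN' : (0 : ℝ) < N := Nat.cast_pos.2 hN
  set w : ℕ → E := fun i ↦ AffineMap.lineMap x y ((i : ℝ) / N)
  have hstep (i : ℕ) : ‖w i - w (i + 1)‖ = ‖x - y‖ / N := by
    rw [← dist_eq_norm, dist_lineMap_lineMap, Real.dist_eq, dist_eq_norm,
      show (i : ℝ) / N - ((i + 1 : ℕ) : ℝ) / N = -(1 / N) by push_cast; ring, abs_neg,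
      abs_of_pos (by positivity)]
    ring
  have hmem (i : ℕ) (hi : i ≤ N) : w i ∈ S :=
    hS.lineMap_mem hx hy ⟨by positivity, div_le_one_of_le₀ (by exact_mod_cast hi) hN'.le⟩
  calc ‖f x - f y‖ = dist (f (w 0)) (f (w N)) := by simp [w, dist_eq_norm, hN'.ne']
    _ ≤ ∑ i ∈ Finset.range N, dist (f (w i)) (f (w (i + 1))) :=
      dist_le_range_sum_dist (fun i ↦ f (w i)) N
    _ ≤ ∑ _i ∈ Finset.range N, C * ‖x - y‖ ^ lam := by
      refine Finset.sum_le_sum fun i hi ↦ ?_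
      rw [Finset.mem_range] at hi
      rw [dist_eq_norm]
      refine (hloc _ (hmem i hi.le) _ (hmem (i + 1) hi) ?_).trans ?_
      · rw [hstep, div_lt_iff₀ hN', mul_comm]; exact hxy
      · rw [hstep]
        gcongr
        exact div_le_self (norm_nonneg _) (by exact_mod_cast hN)
    _ = N * C * ‖x - y‖ ^ lam := by simp [mul_assoc]

variable [NormedSpace ℝ F]

theorem norm_sub_le_mul_integral_norm_fderiv_segment {u : E → F} {U : Set E} (hU : IsOpen U)
    (hu : ContDiffOn ℝ 1 u U) {p z : E} (hseg : segment ℝ p z ⊆ U) :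
    ‖u z - u p‖ ≤ ‖z - p‖ * ∫ t in Ioc (0 : ℝ) 1, ‖fderiv ℝ u (p + t • (z - p))‖ := by
  set γ : ℝ → E := fun t ↦ p + t • (z - p)
  have hγc : Continuous γ := by fun_prop
  have hγU : MapsTo γ (Icc 0 1) U := fun t ht ↦
    hseg (segment_eq_image' ℝ p z ▸ mem_image_of_mem γ ht)
  have hderiv : ∀ t ∈ Icc (0 : ℝ) 1, HasDerivAt (u ∘ γ) (fderiv ℝ u (γ t) (z - p)) t := by
    intro t ht
    have hγ' : HasDerivAt γ (z - p) t := by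
      simpa [γ] using ((hasDerivAt_id t).smul_const (z - p)).const_add p
    exact ((hu.differentiableOn one_ne_zero).differentiableAt
      (hU.mem_nhds (hγU ht))).hasFDerivAt.comp_hasDerivAt t hγ'
  have hDu : ContinuousOn (fun t ↦ ‖fderiv ℝ u (γ t)‖) (Icc 0 1) :=
    ((hu.continuousOn_fderiv_of_isOpen hU le_rfl).comp hγc.continuousOn hγU).norm
  calc ‖u z - u p‖ = ‖(u ∘ γ) 1 - (u ∘ γ) 0‖ := by simp [γ]
    _ ≤ ∫ t in (0 : ℝ)..1, ‖z - p‖ * ‖fderiv ℝ u (γ t)‖ := by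
      refine norm_sub_le_integral_of_norm_deriv_le_of_le zero_le_one
        (hu.continuousOn.comp hγc.continuousOn hγU)
        (fun t ht ↦ (hderiv t (Ioo_subset_Icc_self ht)).differentiableAt.differentiableWithinAt)
        (.of_forall fun t ht ↦ ?_)
        ((continuousOn_const.mul hDu).intervalIntegrable_of_Icc zero_le_one)
      rw [(hderiv t (Ioo_subset_Icc_self ht)).deriv, mul_comm]
      exact (fderiv ℝ u (γ t)).le_opNorm _
    _ = ‖z - p‖ * ∫ t in Ioc (0 : ℝ) 1, ‖fderiv ℝ u (γ t)‖ := by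
      rw [intervalIntegral.integral_const_mul, intervalIntegral.integral_of_le zero_le_one]

variable [FiniteDimensional ℝ E] [MeasurableSpace E] (μ : Measure E) [μ.IsAddHaarMeasure]

theorem addHaar_real_ball_pos (x : E) {r : ℝ} (hr : 0 < r) : 0 < μ.real (ball x r) :=
  ENNReal.toReal_pos (measure_ball_pos μ x hr).ne' measure_ball_lt_top.ne

variable [BorelSpace E]

theorem ContinuousOn.integrableOn_ball {G : Type*} [NormedAddCommGroup G] {g : E → G} {x : E}
    {r : ℝ} (hg : ContinuousOn g (closedBall x r)) : IntegrableOn g (ball x r) μ :=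
  (hg.integrableOn_compact (isCompact_closedBall x r)).mono_set ball_subset_closedBall

theorem addHaar_real_ball_of_pos (x : E) {r : ℝ} (hr : 0 < r) :
    μ.real (ball x r) = r ^ finrank ℝ E * μ.real (ball 0 1) := by
  rw [measureReal_def, Measure.addHaar_ball_of_pos μ x hr, ENNReal.toReal_mul,
    ENNReal.toReal_ofReal (by positivity), measureReal_def]

theorem setIntegral_ball_le_of_setIntegral_pow_ball_le [Nontrivial E] {g : E → ℝ} {q : E}
    {s K lam : ℝ} (hs : 0 < s) (hK : 0 ≤ K) (hg0 : ∀ x, 0 ≤ g x)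
    (hg : ContinuousOn g (closedBall q s))
    (hgrowth : ∫ x in ball q s, g x ^ finrank ℝ E ∂μ ≤
      K ^ finrank ℝ E * s ^ ((finrank ℝ E : ℝ) * lam)) :
    ∫ x in ball q s, g x ∂μ ≤
      μ.real (ball 0 1) ^ (1 - 1 / (finrank ℝ E : ℝ)) * K * s ^ ((finrank ℝ E : ℝ) - 1 + lam) := by
  set n := finrank ℝ E
  have hn0 : n ≠ 0 := finrank_pos.ne'
  have hV := addHaar_real_ball_pos μ (0 : E) one_pos
  refine le_of_pow_le_pow_left₀ hn0 (by positivity) ?_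
  calc (∫ x in ball q s, g x ∂μ) ^ n
      ≤ μ.real (ball q s) ^ (n - 1) * ∫ x in ball q s, g x ^ n ∂μ :=
        pow_setIntegral_le_mul_setIntegral_pow hn0 measurableSet_ball measure_ball_lt_top.ne
          (fun x _ ↦ hg0 x) (hg.integrableOn_ball μ) ((hg.pow n).integrableOn_ball μ)
    _ ≤ (s ^ n * μ.real (ball (0 : E) 1)) ^ (n - 1) * (K ^ n * s ^ ((n : ℝ) * lam)) := by
        rw [addHaar_real_ball_of_pos μ q hs]; gcongr
    _ = _ := by
        obtain ⟨k, hk⟩ : ∃ k, n = k + 1 := ⟨n - 1, by omega⟩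
        have e1 : (1 - 1 / (n : ℝ)) * n = (k : ℕ) := by rw [hk]; push_cast; field_simp; ring
        have e2 : ((n : ℝ) - 1 + lam) * n = ((n * k : ℕ) : ℝ) + n * lam := by
          rw [hk]; push_cast; ring
        simp only [mul_pow]
        rw [← Real.rpow_mul_natCast hV.le, ← Real.rpow_mul_natCast hs.le, e1, e2,
          Real.rpow_add hs, Real.rpow_natCast, Real.rpow_natCast, hk, Nat.add_sub_cancel]
        ring

theorem setIntegral_ball_comp_homothety {G : Type*} [NormedAddCommGroup G] [NormedSpace ℝ G]
    (g : E → G) (p m : E) (ρ : ℝ) {t : ℝ} (ht : 0 < t) :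
    ∫ z in ball m ρ, g (p + t • (z - p)) ∂μ =
      (t ^ finrank ℝ E)⁻¹ • ∫ w in ball (p + t • (m - p)) (t * ρ), g w ∂μ := by
  have htrans (f : E → G) (a c : E) (r : ℝ) :
      ∫ w in ball c r, f (a + w) ∂μ = ∫ w in ball (a + c) r, f w ∂μ := by
    rw [← (measurePreserving_add_left μ a).setIntegral_preimage_emb
      (measurableEmbedding_addLeft a) f (ball (a + c) r), preimage_add_ball, add_sub_cancel_left]
  have hball : t • ball (m - p) ρ = ball (t • (m - p)) (t * ρ) := by
    rw [_root_.smul_ball ht.ne', Real.norm_eq_abs, abs_of_pos ht]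
  calc ∫ z in ball m ρ, g (p + t • (z - p)) ∂μ
      = ∫ v in ball (m - p) ρ, g (p + t • v) ∂μ := by
        simpa using (htrans (fun z ↦ g (p + t • (z - p))) p (m - p) ρ).symm
    _ = _ := by
        rw [Measure.setIntegral_comp_smul_of_pos μ (fun w ↦ g (p + w)) _ ht, hball, htrans]

def BallIntegralGrowth (g : E → ℝ) (p : E) (r A α : ℝ) : Prop :=
  ∀ s, 0 < s → s ≤ r → ∫ w in ball p s, g w ∂μ ≤ A * s ^ α

theorem setIntegral_ball_comp_homothety_le {g : E → ℝ} {p m : E} {ρ r A α t : ℝ}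
    (hg0 : ∀ x, 0 ≤ g x) (hg : IntegrableOn g (ball p r) μ)
    (hgrowth : BallIntegralGrowth μ g p r A α) (hr : 0 < r) (hmr : ρ + dist m p ≤ r)
    (ht : t ∈ Ioc (0 : ℝ) 1) :
    ∫ z in ball m ρ, g (p + t • (z - p)) ∂μ ≤ A * r ^ α * t ^ (α - finrank ℝ E) := by
  obtain ⟨ht0, ht1⟩ := ht
  have hsub : ball (p + t • (m - p)) (t * ρ) ⊆ ball p (t * r) := by
    refine ball_subset_ball' ?_
    rw [dist_eq_norm, add_sub_cancel_left, norm_smul, Real.norm_eq_abs, abs_of_pos ht0,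
      ← dist_eq_norm]
    nlinarith
  rw [setIntegral_ball_comp_homothety μ g p m ρ ht0, smul_eq_mul]
  calc (t ^ finrank ℝ E)⁻¹ * ∫ w in ball (p + t • (m - p)) (t * ρ), g w ∂μ
      ≤ (t ^ finrank ℝ E)⁻¹ * ∫ w in ball p (t * r), g w ∂μ := by
        refine mul_le_mul_of_nonneg_left (setIntegral_mono_set ?_ (.of_forall hg0)
          hsub.eventuallyLE) (by positivity)
        exact hg.mono_set (ball_subset_ball (by nlinarith))
    _ ≤ (t ^ finrank ℝ E)⁻¹ * (A * (t * r) ^ α) := by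
        gcongr
        exact hgrowth _ (by positivity) (by nlinarith)
    _ = A * r ^ α * t ^ (α - finrank ℝ E) := by
        rw [Real.mul_rpow ht0.le hr.le, Real.rpow_sub ht0, Real.rpow_natCast]
        field_simp

theorem integrable_comp_homothety_prod {g : E → ℝ} {p m : E} {ρ r : ℝ}
    (hg : ContinuousOn g (closedBall p r)) (hmr : ball m ρ ⊆ closedBall p r) :
    Integrable (fun q : E × ℝ ↦ g (p + q.2 • (q.1 - p)))
      ((μ.restrict (ball m ρ)).prod (volume.restrict (Ioc 0 1))) := by
  have hmaps : MapsTo (fun q : E × ℝ ↦ p + q.2 • (q.1 - p)) (ball m ρ ×ˢ Ioc 0 1)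
      (closedBall p r) := fun q ⟨hz, ht0, ht1⟩ ↦
    (convex_closedBall p r).add_smul_sub_mem (mem_closedBall_self (dist_nonneg.trans (hmr hz)))
      (hmr hz) ⟨ht0.le, ht1⟩
  obtain ⟨M, hM⟩ := (isCompact_closedBall p r).exists_bound_of_continuousOn hg
  have : IsFiniteMeasure (μ.restrict (ball m ρ)) :=
    isFiniteMeasure_restrict.2 measure_ball_lt_top.ne
  have : IsFiniteMeasure (volume.restrict (Ioc (0 : ℝ) 1)) :=
    isFiniteMeasure_restrict.2 (by simp)
  refine Integrable.mono' (integrable_const M) ?_ ?_ <;> rw [Measure.prod_restrict]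
  · exact (hg.comp (by fun_prop) hmaps).aestronglyMeasurable
      (measurableSet_ball.prod measurableSet_Ioc)
  · filter_upwards [ae_restrict_mem (measurableSet_ball.prod measurableSet_Ioc)] with q hq
    exact hM _ (hmaps hq)

theorem setIntegral_ball_norm_sub_le {u : E → F} {U : Set E} (hU : IsOpen U)
    (hu : ContDiffOn ℝ 1 u U) {p m : E} {ρ r A lam : ℝ} (hr : 0 < r) (hlam : 0 < lam)
    (hpU : closedBall p r ⊆ U) (hmr : ρ + dist m p ≤ r)
    (hgrowth : BallIntegralGrowth μ (fun w ↦ ‖fderiv ℝ u w‖) p r A (finrank ℝ E - 1 + lam)) :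
    ∫ z in ball m ρ, ‖u z - u p‖ ∂μ ≤ A / lam * r ^ (finrank ℝ E + lam) := by
  set ν := volume.restrict (Ioc (0 : ℝ) 1)
  set G : E × ℝ → ℝ := fun q ↦ ‖fderiv ℝ u (p + q.2 • (q.1 - p))‖
  have hsub : ball m ρ ⊆ closedBall p r :=
    ball_subset_closedBall.trans (closedBall_subset_closedBall' hmr)
  have hDu : ContinuousOn (fun w ↦ ‖fderiv ℝ u w‖) (closedBall p r) :=
    ((hu.continuousOn_fderiv_of_isOpen hU le_rfl).mono hpU).norm
  have hGint : Integrable G ((μ.restrict (ball m ρ)).prod ν) :=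
    integrable_comp_homothety_prod μ hDu hsub
  have hpointwise : ∀ z ∈ ball m ρ, ‖u z - u p‖ ≤ r * ∫ t, G (z, t) ∂ν := by
    intro z hz
    have hseg : segment ℝ p z ⊆ U := ((convex_closedBall p r).segment_subset
      (mem_closedBall_self hr.le) (hsub hz)).trans hpU
    refine (norm_sub_le_mul_integral_norm_fderiv_segment hU hu hseg).trans ?_
    gcongr
    exact mem_closedBall_iff_norm.1 (hsub hz)
  have hinner : ∀ t ∈ Ioc (0 : ℝ) 1,
      ∫ z in ball m ρ, G (z, t) ∂μ ≤ A * r ^ (finrank ℝ E - 1 + lam) * t ^ (lam - 1) := by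
    intro t ht
    convert setIntegral_ball_comp_homothety_le μ (g := fun w ↦ ‖fderiv ℝ u w‖)
      (fun w ↦ norm_nonneg _) (hDu.integrableOn_ball μ) hgrowth hr hmr ht using 3
    ring
  have hint : IntegrableOn (fun z ↦ ‖u z - u p‖) (ball m ρ) μ :=
    ((hu.continuousOn.mono ((closedBall_subset_closedBall' hmr).trans hpU)).sub
      continuousOn_const).norm.integrableOn_ball μ
  have hpow : ∫ t in Ioc (0 : ℝ) 1, t ^ (lam - 1) = 1 / lam := by
    rw [← intervalIntegral.integral_of_le zero_le_one, integral_rpow (by simp [hlam]),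
      sub_add_cancel, Real.one_rpow, Real.zero_rpow hlam.ne']
    ring
  calc ∫ z in ball m ρ, ‖u z - u p‖ ∂μ
      ≤ ∫ z in ball m ρ, r * ∫ t, G (z, t) ∂ν ∂μ :=
        setIntegral_mono_on hint (hGint.integral_prod_left.const_mul r) measurableSet_ball
          hpointwise
    _ = r * ∫ t, ∫ z in ball m ρ, G (z, t) ∂μ ∂ν := by
        rw [integral_const_mul, integral_integral_swap hGint]
    _ ≤ r * ∫ t in Ioc (0 : ℝ) 1, A * r ^ (finrank ℝ E - 1 + lam) * t ^ (lam - 1) := by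
        refine mul_le_mul_of_nonneg_left (setIntegral_mono_on hGint.integral_prod_right ?_
          measurableSet_Ioc hinner) hr.le
        exact ((intervalIntegrable_iff_integrableOn_Ioc_of_le zero_le_one).1
          (intervalIntegral.intervalIntegrable_rpow' (by linarith))).const_mul _
    _ = A / lam * r ^ (finrank ℝ E + lam) := by
        rw [integral_const_mul, hpow, show (finrank ℝ E : ℝ) + lam = finrank ℝ E - 1 + lam + 1
          by ring, Real.rpow_add_one hr.ne']
        ring

theorem norm_sub_le_of_ballIntegralGrowth {u : E → F} {U : Set E} (hU : IsOpen U)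
    (hu : ContDiffOn ℝ 1 u U) {x y : E} {A lam : ℝ} (hxy : x ≠ y) (hlam : 0 < lam)
    (hxyU : ∀ p ∈ ({x, y} : Set E), closedBall p ‖x - y‖ ⊆ U)
    (hgrowth : ∀ p ∈ ({x, y} : Set E),
      BallIntegralGrowth μ (fun w ↦ ‖fderiv ℝ u w‖) p ‖x - y‖ A (finrank ℝ E - 1 + lam)) :
    ‖u x - u y‖ ≤ 2 ^ (finrank ℝ E + 1) * A / (lam * μ.real (ball 0 1)) * ‖x - y‖ ^ lam := by
  set r := ‖x - y‖
  set m := midpoint ℝ x y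
  have hr : 0 < r := norm_pos_iff.2 (sub_ne_zero.2 hxy)
  have hx : x ∈ ({x, y} : Set E) := mem_insert x {y}
  have hy : y ∈ ({x, y} : Set E) := mem_insert_of_mem x rfl
  have hmid : ∀ p ∈ ({x, y} : Set E), r / 2 + dist m p ≤ r := by
    rintro p (rfl | rfl)
    · rw [dist_midpoint_left, dist_eq_norm, Real.norm_two]; linarith
    · rw [dist_midpoint_right, dist_eq_norm, Real.norm_two]; linarith
  have hint (p : E) (hp : p ∈ ({x, y} : Set E)) :
      IntegrableOn (fun z ↦ ‖u z - u p‖) (ball m (r / 2)) μ :=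
    ((hu.continuousOn.mono ((closedBall_subset_closedBall' (hmid p hp)).trans (hxyU p hp))).sub
      continuousOn_const).norm.integrableOn_ball μ
  have hbound (p : E) (hp : p ∈ ({x, y} : Set E)) :
      ∫ z in ball m (r / 2), ‖u z - u p‖ ∂μ ≤ A / lam * r ^ (finrank ℝ E + lam) :=
    setIntegral_ball_norm_sub_le μ hU hu hr hlam (hxyU p hp) (hmid p hp) (hgrowth p hp)
  have havg : μ.real (ball m (r / 2)) * ‖u x - u y‖ ≤ 2 * (A / lam * r ^ (finrank ℝ E + lam)) :=
    calc μ.real (ball m (r / 2)) * ‖u x - u y‖ = ∫ z in ball m (r / 2), ‖u x - u y‖ ∂μ := by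
          rw [setIntegral_const, smul_eq_mul]
      _ ≤ ∫ z in ball m (r / 2), ‖u z - u x‖ + ‖u z - u y‖ ∂μ :=
          setIntegral_mono_on (integrableOn_const measure_ball_lt_top.ne)
            ((hint x hx).add (hint y hy)) measurableSet_ball
            fun z _ ↦ by simpa only [dist_eq_norm] using dist_triangle_left (u x) (u y) (u z)
      _ ≤ 2 * (A / lam * r ^ (finrank ℝ E + lam)) := by
          rw [integral_add (hint x hx) (hint y hy), two_mul]
          exact add_le_add (hbound x hx) (hbound y hy)
  have hV := addHaar_real_ball_pos μ (0 : E) one_pos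
  rw [addHaar_real_ball_of_pos μ m (by positivity), ← le_div_iff₀' (by positivity)] at havg
  refine havg.trans_eq ?_
  rw [Real.rpow_add hr, Real.rpow_natCast, div_pow]
  field_simp
  ring

theorem norm_sub_le_of_setIntegral_pow_ball_le {u : E → F} {U : Set E} (hU : IsOpen U)
    (hu : ContDiffOn ℝ 1 u U) {x y : E} {K lam : ℝ} (hxy : x ≠ y) (hK : 0 ≤ K) (hlam : 0 < lam)
    (hxyU : ∀ p ∈ ({x, y} : Set E), closedBall p ‖x - y‖ ⊆ U)
    (hmorrey : ∀ p ∈ ({x, y} : Set E), ∀ s, 0 < s → s ≤ ‖x - y‖ →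
      ∫ w in ball p s, ‖fderiv ℝ u w‖ ^ finrank ℝ E ∂μ ≤
        K ^ finrank ℝ E * s ^ ((finrank ℝ E : ℝ) * lam)) :
    ‖u x - u y‖ ≤ 2 ^ (finrank ℝ E + 1) * μ.real (ball 0 1) ^ (1 - 1 / (finrank ℝ E : ℝ)) /
      (lam * μ.real (ball 0 1)) * K * ‖x - y‖ ^ lam := by
  have : Nontrivial E := ⟨⟨x, y, hxy⟩⟩
  have hDu := (hu.continuousOn_fderiv_of_isOpen hU le_rfl).norm
  convert norm_sub_le_of_ballIntegralGrowth μ hU hu hxy hlam hxyU fun p hp s hs hsr ↦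
    setIntegral_ball_le_of_setIntegral_pow_ball_le μ hs hK (fun w ↦ norm_nonneg _)
      (hDu.mono ((closedBall_subset_closedBall hsr).trans (hxyU p hp))) (hmorrey p hp s hs hsr)
    using 2
  ring

theorem morrey_dirichlet_growth_general (n d : ℕ)
    (lam : ℝ) (hlam0 : 0 < lam) :
    ∃ C : ℝ, 0 < C ∧ ∀ K : ℝ, 0 ≤ K →
      ∀ u : EuclideanSpace ℝ (Fin n) → EuclideanSpace ℝ (Fin d),
      ContDiffOn ℝ 1 u (ball (0 : EuclideanSpace ℝ (Fin n)) 1) →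
      (∀ x ∈ ball (0 : EuclideanSpace ℝ (Fin n)) (3/4), ∀ r : ℝ, 0 < r → r < 1/4 →
        (∫ y in ball x r, ‖fderiv ℝ u y‖ ^ n) ≤ K ^ n * r ^ ((n : ℝ) * lam)) →
      ∀ x ∈ ball (0 : EuclideanSpace ℝ (Fin n)) (1/2),
      ∀ y ∈ ball (0 : EuclideanSpace ℝ (Fin n)) (1/2),
        ‖u x - u y‖ ≤ C * K * ‖x - y‖ ^ lam := by
  have hdim : finrank ℝ (EuclideanSpace ℝ (Fin n)) = n := finrank_euclideanSpace_fin
  set V := volume.real (ball (0 : EuclideanSpace ℝ (Fin n)) 1)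
  have hV : 0 < V := addHaar_real_ball_pos volume 0 one_pos
  set C₀ := 2 ^ (n + 1) * V ^ (1 - 1 / (n : ℝ)) / (lam * V)
  refine ⟨4 * C₀, by positivity, fun K hK u hu hM x hx y hy ↦ ?_⟩
  have hlocal : ∀ a ∈ ball (0 : EuclideanSpace ℝ (Fin n)) (1 / 2), ∀ b ∈ ball 0 (1 / 2),
      ‖a - b‖ < 1 / 4 → ‖u a - u b‖ ≤ C₀ * K * ‖a - b‖ ^ lam := by
    intro a ha b hb hab
    rcases eq_or_ne a b with rfl | hne
    · simp [Real.zero_rpow hlam0.ne']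
    have hab' : ∀ p ∈ ({a, b} : Set _), ‖p‖ < 1 / 2 := by
      rintro p (rfl | rfl) <;> rwa [← mem_ball_zero_iff]
    simpa only [hdim] using norm_sub_le_of_setIntegral_pow_ball_le volume isOpen_ball hu hne hK
      hlam0 (fun p hp ↦ closedBall_subset_ball' (by rw [dist_zero_right]; linarith [hab' p hp]))
      fun p hp s hs hsr ↦ by
        rw [hdim]
        exact hM p (mem_ball_zero_iff.2 (by linarith [hab' p hp])) s hs (by linarith)
  have hxy : ‖x - y‖ < (4 : ℕ) * (1 / 4) := by
    rw [mem_ball_zero_iff] at hx hy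
    linarith [norm_sub_le x y]
  calc ‖u x - u y‖ ≤ (4 : ℕ) * (C₀ * K) * ‖x - y‖ ^ lam :=
        (convex_ball 0 (1 / 2)).norm_sub_le_of_local_norm_sub_le (by positivity) hlam0.le
          hlocal hx hy hxy
    _ = 4 * C₀ * K * ‖x - y‖ ^ lam := by push_cast; ring

/-- Morrey's Dirichlet growth theorem in the borderline exponent `p = n`:
if `u ∈ C¹(B₁, ℝ^d)` satisfies `∫_{B_r(x)} ‖Du‖^n ≤ K^n r^{nλ}` for all `x ∈ B_{3/4}` and
`0 < r < 1/4`, then `‖u(x) − u(y)‖ ≤ C K ‖x−y‖^λ` on `B_{1/2}`, where `C = C(n,d,λ)`. -/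
theorem morrey_dirichlet_growth (n d : ℕ) (hn : 1 ≤ n) (hd : 1 ≤ d)
    (lam : ℝ) (hlam0 : 0 < lam) (hlam1 : lam ≤ 1) :
    ∃ C : ℝ, 0 < C ∧ ∀ K : ℝ, 0 ≤ K →
      ∀ u : EuclideanSpace ℝ (Fin n) → EuclideanSpace ℝ (Fin d),
      ContDiffOn ℝ 1 u (ball (0 : EuclideanSpace ℝ (Fin n)) 1) →
      (∀ x ∈ ball (0 : EuclideanSpace ℝ (Fin n)) (3/4), ∀ r : ℝ, 0 < r → r < 1/4 →
        (∫ y in ball x r, ‖fderiv ℝ u y‖ ^ n) ≤ K ^ n * r ^ ((n : ℝ) * lam)) →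
      ∀ x ∈ ball (0 : EuclideanSpace ℝ (Fin n)) (1/2),
      ∀ y ∈ ball (0 : EuclideanSpace ℝ (Fin n)) (1/2),
        ‖u x - u y‖ ≤ C * K * ‖x - y‖ ^ lam :=
  morrey_dirichlet_growth_general n d lam hlam0
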